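/- arXiv:1903.11346 — 6 statements merged into one kernel-verified Lean document; each statement's English description precedes it below -/
import Mathlib

section
/- Let I and J be disjoint nonempty open intervals of ℝ and let g ∈ L²(ℝ). If for almost every x ∈ I one has ∫_J g(t)/(x−t) dt = 0, then g = 0 almost everywhere on J. -/
open MeasureTheory

/-- Poisson kernel of the upper half-plane at height `y`. -/
noncomputable def Pker (y x : ℝ) : ℝ := (1 / Real.pi) * y / (x ^ 2 + y ^ 2)

/-- Conjugate Poisson kernel at height `y`. -/
noncomputable def Qker (y x : ℝ) : ℝ := (1 / Real.pi) * x / (x ^ 2 + y ^ 2)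

/-- Partial derivative in `x` of the Poisson kernel. -/
noncomputable def dPdx (y x : ℝ) : ℝ := -(1 / Real.pi) * (2 * x * y) / (x ^ 2 + y ^ 2) ^ 2

/-- Partial derivative in `y` of the Poisson kernel. -/
noncomputable def dPdy (y x : ℝ) : ℝ := (1 / Real.pi) * (x ^ 2 - y ^ 2) / (x ^ 2 + y ^ 2) ^ 2

/-- Partial derivative in `x` of the conjugate Poisson kernel. -/
noncomputable def dQdx (y x : ℝ) : ℝ := (1 / Real.pi) * (y ^ 2 - x ^ 2) / (x ^ 2 + y ^ 2) ^ 2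

/-- Convolution on `ℝ`: `(k ⋆ g) x = ∫ k (x - t) * g t dt`. -/
noncomputable def conv (k g : ℝ → ℝ) (x : ℝ) : ℝ := ∫ t, k (x - t) * g t

/-!
Write `F n x = ∫_J g(t) / (x - t)^(n+1) dt`. Off `[c, d]` these are differentiable with
`F n' = -(n+1) F (n+1)`. As `F 0` is continuous on `I` and vanishes a.e. there, it vanishes on all
of `I`, and then so does every `F n`. At a point `x₀ ∈ I` this says that `g(t) / (x₀ - t)` is
orthogonal on `J` to every power of the continuous injective function `t ↦ (x₀ - t)⁻¹`. By
Stone–Weierstrass these powers span a dense subspace of `C([c, d])`, so `g(t) / (x₀ - t)`, and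
hence `g`, vanishes a.e. on `J`.
-/

open Set Metric Filter Topology

section Moments

variable {X : Type*} [TopologicalSpace X] [CompactSpace X] [MeasurableSpace X]
  [OpensMeasurableSpace X] {μ : Measure X}

theorem MeasureTheory.Integrable.mul_continuousMap {u : X → ℝ} (hu : Integrable u μ) (φ : C(X, ℝ)) :
    Integrable (fun x => u x * φ x) μ :=
  hu.mul_bdd φ.continuous.aestronglyMeasurable
    (Eventually.of_forall fun x => φ.norm_coe_le_norm x)

noncomputable def integralMulCLM {u : X → ℝ} (hu : Integrable u μ) : C(X, ℝ) →L[ℝ] ℝ :=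
  LinearMap.mkContinuous
    { toFun := fun φ => ∫ x, u x * φ x ∂μ
      map_add' := fun φ ψ => by
        simp only [ContinuousMap.add_apply, mul_add]
        exact integral_add (hu.mul_continuousMap φ) (hu.mul_continuousMap ψ)
      map_smul' := fun r φ => by
        simp only [ContinuousMap.smul_apply, smul_eq_mul, mul_left_comm _ r,
          integral_const_mul, RingHom.id_apply] }
    (∫ x, ‖u x‖ ∂μ) fun φ => by
      simp only [LinearMap.coe_mk, AddHom.coe_mk]
      calc ‖∫ x, u x * φ x ∂μ‖ ≤ ∫ x, ‖u x‖ * ‖φ‖ ∂μ :=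
            norm_integral_le_of_norm_le (hu.norm.mul_const _) (Eventually.of_forall fun x => by
              rw [norm_mul]; gcongr; exact φ.norm_coe_le_norm x)
        _ = (∫ x, ‖u x‖ ∂μ) * ‖φ‖ := integral_mul_const _ _

theorem integralMulCLM_apply {u : X → ℝ} (hu : Integrable u μ) (φ : C(X, ℝ)) :
    integralMulCLM hu φ = ∫ x, u x * φ x ∂μ :=
  rfl

theorem integral_mul_eq_zero_of_moments_eq_zero {u : X → ℝ} (hu : Integrable u μ)
    {f : C(X, ℝ)} (hf : Function.Injective f) (h : ∀ k : ℕ, ∫ x, u x * f x ^ k ∂μ = 0)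
    (φ : C(X, ℝ)) : ∫ x, u x * φ x ∂μ = 0 := by
  have hsep : (Algebra.adjoin ℝ {f}).SeparatesPoints := fun x y hxy =>
    ⟨f, ⟨f, Algebra.subset_adjoin rfl, rfl⟩, hf.ne hxy⟩
  have hker : (Algebra.adjoin ℝ {f} : Set C(X, ℝ)) ⊆
      LinearMap.ker (integralMulCLM hu : C(X, ℝ) →ₗ[ℝ] ℝ) := by
    rw [Algebra.adjoin_singleton_eq_range_aeval]
    rintro _ ⟨p, rfl⟩
    have : (integralMulCLM hu).toLinearMap ∘ₗ (Polynomial.aeval f).toLinearMap = 0 :=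
      Polynomial.lhom_ext' fun n => LinearMap.ext fun r => by
        simp [integralMulCLM_apply, mul_left_comm _ r, integral_const_mul, h]
    exact LinearMap.congr_fun this p
  have hφ : φ ∈ closure (Algebra.adjoin ℝ {f} : Set C(X, ℝ)) := by
    rw [← Subalgebra.topologicalClosure_coe,
      ContinuousMap.subalgebra_topologicalClosure_eq_top_of_separatesPoints _ hsep]
    trivial
  exact closure_minimal hker (integralMulCLM hu).isClosed_ker hφ

end Moments

theorem ae_eq_zero_of_moments_eq_zero {E : Type*} [NormedAddCommGroup E] [NormedSpace ℝ E]
    [FiniteDimensional ℝ E] [MeasurableSpace E] [BorelSpace E] {μ : Measure E} {K : Set E}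
    (hK : IsCompact K) (hμK : ∀ᵐ x ∂μ, x ∈ K) {u : E → ℝ} (hu : Integrable u μ) {f : E → ℝ}
    (hf : ContinuousOn f K) (hinj : InjOn f K) (h : ∀ k : ℕ, ∫ x, u x * f x ^ k ∂μ = 0) :
    u =ᵐ[μ] 0 := by
  have : CompactSpace K := isCompact_iff_compactSpace.mp hK
  have hμ : μ.restrict K = μ := Measure.restrict_eq_self_of_ae_mem hμK
  have hsub (v : E → ℝ) : ∫ x : K, v x ∂μ.comap Subtype.val = ∫ x, v x ∂μ := by
    rw [integral_subtype_comap hK.measurableSet, hμ]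
  have huK : Integrable (u ∘ Subtype.val : K → ℝ) (μ.comap Subtype.val) := by
    rw [← integrableOn_iff_comap_subtypeVal hK.measurableSet, IntegrableOn, hμ]
    exact hu
  refine ae_eq_zero_of_integral_contDiff_smul_eq_zero hu.locallyIntegrable fun φ hφ _ => ?_
  have := integral_mul_eq_zero_of_moments_eq_zero huK (f := ⟨K.domRestrict f, hf.domRestrict⟩)
    hinj.injective (fun k => (hsub _).trans (h k))
    ⟨K.domRestrict φ, hφ.continuous.continuousOn.domRestrict⟩
  rw [← hsub]
  simpa [mul_comm] using this

theorem IsClosed.exists_pos_forall_le_dist {α : Type*} [PseudoMetricSpace α] {K : Set α}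
    (hK : IsClosed K) {x : α} (hx : x ∉ K) : ∃ δ > 0, ∀ y ∈ ball x δ, ∀ t ∈ K, δ ≤ dist y t := by
  obtain ⟨ε, hε, hball⟩ := Metric.isOpen_iff.1 hK.isOpen_compl x hx
  refine ⟨ε / 2, half_pos hε, fun y hy t ht => ?_⟩
  have hεt : ε ≤ dist t x := not_lt.1 fun h => hball (mem_ball.2 h) ht
  linarith [dist_triangle t y x, dist_comm y t, mem_ball.1 hy]

section CauchyTransform

variable {μ : Measure ℝ} {g : ℝ → ℝ}

/-- Off the support of `μ`, `(-1)^n n! • cauchyTransform μ g n` is the `n`-th derivative of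
`cauchyTransform μ g 0`. -/
noncomputable def cauchyTransform (μ : Measure ℝ) (g : ℝ → ℝ) (n : ℕ) (x : ℝ) : ℝ :=
  ∫ t, g t / (x - t) ^ (n + 1) ∂μ

theorem hasDerivAt_div_sub_pow (c : ℝ) (n : ℕ) {t y : ℝ} (hyt : y ≠ t) :
    HasDerivAt (fun y => c / (y - t) ^ (n + 1)) (-(n + 1) * (c / (y - t) ^ (n + 2))) y := by
  have hpow : HasDerivAt (fun y => (y - t) ^ (n + 1)) ((n + 1) * (y - t) ^ n) y := by
    simpa using ((hasDerivAt_id' y).sub_const t).fun_pow (n + 1)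
  have hyt' : y - t ≠ 0 := sub_ne_zero.2 hyt
  refine ((hasDerivAt_const y c).fun_div hpow (pow_ne_zero _ hyt')).congr_deriv ?_
  field_simp
  ring

variable {K : Set ℝ} (hK : IsClosed K) (hμK : ∀ᵐ t ∂μ, t ∈ K) (hg : Integrable g μ)
include hK hμK hg

theorem integrable_div_sub_pow {x : ℝ} (hx : x ∉ K) (n : ℕ) :
    Integrable (fun t => g t / (x - t) ^ n) μ := by
  obtain ⟨δ, hδ, hsep⟩ := hK.exists_pos_forall_le_dist hx
  refine hg.mul_bdd (c := (δ ^ n)⁻¹) (by fun_prop) (hμK.mono fun t ht => ?_)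
  rw [norm_inv, norm_pow, Real.norm_eq_abs, ← Real.dist_eq]
  gcongr
  exact hsep x (mem_ball_self hδ) t ht

theorem hasDerivAt_cauchyTransform {x : ℝ} (hx : x ∉ K) (n : ℕ) :
    HasDerivAt (cauchyTransform μ g n) (-(n + 1) * cauchyTransform μ g (n + 1) x) x := by
  obtain ⟨δ, hδ, hsep⟩ := hK.exists_pos_forall_le_dist hx
  have hsep_ae : ∀ᵐ t ∂μ, ∀ y ∈ ball x δ, δ ≤ |y - t| :=
    hμK.mono fun t ht y hy => (hsep y hy t ht).trans_eq (Real.dist_eq y t)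
  have hmeas (y : ℝ) (k : ℕ) : AEStronglyMeasurable (fun t => g t / (y - t) ^ k) μ :=
    (hg.aemeasurable.div (by fun_prop)).aestronglyMeasurable
  have hderiv := hasDerivAt_integral_of_dominated_loc_of_deriv_le
    (F := fun y t => g t / (y - t) ^ (n + 1))
    (F' := fun y t => -(n + 1) * (g t / (y - t) ^ (n + 2)))
    (bound := fun t => (n + 1) * (|g t| / δ ^ (n + 2)))
    (ball_mem_nhds x hδ) (Eventually.of_forall fun y => hmeas y (n + 1))
    (integrable_div_sub_pow hK hμK hg hx _)
    ((hmeas x (n + 2)).const_mul _) ?_ ((hg.norm.div_const _).const_mul _) ?_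
  · rw [integral_const_mul] at hderiv
    exact hderiv.2
  · filter_upwards [hsep_ae] with t ht y hy
    rw [norm_mul, norm_neg, norm_div, norm_pow, Real.norm_eq_abs, Real.norm_eq_abs,
      Real.norm_eq_abs, abs_of_nonneg (by positivity : (0 : ℝ) ≤ n + 1)]
    gcongr
    exact ht y hy
  · filter_upwards [hsep_ae] with t ht y hy
    have hyt : y ≠ t := fun h => by simpa [h] using (hδ.trans_le (ht y hy)).ne'
    exact hasDerivAt_div_sub_pow (g t) n hyt

theorem cauchyTransform_eqOn_zero {U : Set ℝ} (hU : IsOpen U) (hUK : Disjoint U K)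
    (h0 : EqOn (cauchyTransform μ g 0) 0 U) (n : ℕ) : EqOn (cauchyTransform μ g n) 0 U := by
  induction n with
  | zero => exact h0
  | succ n ih =>
    intro x hx
    have hderiv := (hasDerivAt_cauchyTransform hK hμK hg (hUK.notMem_of_mem_left hx) n).deriv
    have hloc : cauchyTransform μ g n =ᶠ[𝓝 x] 0 := (hU.eventually_mem hx).mono ih
    rw [hloc.deriv_eq, Pi.zero_def, deriv_const] at hderiv
    have hn : (-(n + 1) : ℝ) ≠ 0 := by linarith
    exact (mul_eq_zero.1 hderiv.symm).resolve_left hn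

end CauchyTransform

/-- If `I = (a,b)` and `J = (c,d)` are disjoint nonempty open intervals, `g ∈ L²(ℝ)`, and
`∫_J g(t)/(x−t) dt = 0` for a.e. `x ∈ I`, then `g = 0` a.e. on `J`. -/
theorem stmt5 (a b c d : ℝ) (hab : a < b) (hcd : c < d)
    (hdisj : Disjoint (Set.Ioo a b) (Set.Ioo c d))
    (g : ℝ → ℝ) (hg : MemLp g 2 volume)
    (hz : ∀ᵐ x ∂(volume.restrict (Set.Ioo a b)), (∫ t in Set.Ioo c d, g t / (x - t)) = 0) :
    ∀ᵐ t ∂(volume.restrict (Set.Ioo c d)), g t = 0 := by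
  have hIK : Disjoint (Ioo a b) (Icc c d) := by
    simpa [closure_Ioo hcd.ne] using hdisj.closure_right isOpen_Ioo
  have hμK : ∀ᵐ t ∂volume.restrict (Ioo c d), t ∈ Icc c d :=
    ae_restrict_of_forall_mem measurableSet_Ioo fun _ ht => Ioo_subset_Icc_self ht
  have hgJ : IntegrableOn g (Ioo c d) :=
    ((hg.locallyIntegrable one_le_two).integrableOn_isCompact isCompact_Icc).mono_set
      Ioo_subset_Icc_self
  have hz' : EqOn (cauchyTransform (volume.restrict (Ioo c d)) g 0) 0 (Ioo a b) := by
    refine Measure.eqOn_open_of_ae_eq (μ := volume) ?_ isOpen_Ioo (fun x hx => ?_)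
      continuousOn_const
    · filter_upwards [hz] with x hx
      simpa [cauchyTransform] using hx
    · exact (hasDerivAt_cauchyTransform isClosed_Icc hμK hgJ (hIK.notMem_of_mem_left hx)
        0).continuousAt.continuousWithinAt
  obtain ⟨x₀, hx₀⟩ := nonempty_Ioo.2 hab
  have hx₀K : x₀ ∉ Icc c d := hIK.notMem_of_mem_left hx₀
  have hsub : ∀ t ∈ Icc c d, x₀ - t ≠ 0 := fun t ht =>
    sub_ne_zero.2 fun h => hx₀K (h ▸ ht)
  have hmom (k : ℕ) : ∫ t in Ioo c d, g t / (x₀ - t) ^ 1 * (x₀ - t)⁻¹ ^ k = 0 :=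
    calc _ = cauchyTransform (volume.restrict (Ioo c d)) g k x₀ :=
          integral_congr_ae (ae_of_all _ fun t => by
            rw [pow_one, inv_pow, ← div_eq_mul_inv, div_div, ← pow_succ'])
      _ = 0 := cauchyTransform_eqOn_zero isClosed_Icc hμK hgJ isOpen_Ioo hIK hz' k hx₀
  have hu := ae_eq_zero_of_moments_eq_zero isCompact_Icc hμK
    (integrable_div_sub_pow isClosed_Icc hμK hgJ hx₀K 1)
    ((continuousOn_const.sub continuousOn_id).inv₀ hsub)
    (inv_injective.comp sub_right_injective).injOn hmom
  filter_upwards [hu, hμK] with t ht htK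
  simpa [hsub t htK] using ht
end

section
/- Let a < b be real numbers. For every x ∈ (a,b), the principal value of the integral of 1/(√((t−a)(b−t))·(x−t)) over (a,b) vanishes; that is, lim_{ε→0⁺} ∫_{{t ∈ (a,b) : |t−x| > ε}} 1/(√((t−a)(b−t))·(x−t)) dt = 0. In other words, the function t ↦ 1/√((t−a)(b−t)) on (a,b) is annihilated on (a,b) by the truncated Hilbert transform. -/
open MeasureTheory

/-! On `[a, b] \ {x}` the integrand has the explicit primitive
`F t = (2 log (√((t-a)(b-x)) + √((x-a)(b-t))) - log |t - x|) / √((x-a)(b-x))`.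
It is continuous up to both endpoints and takes the same value `log (b - a) / √((x-a)(b-x))`
there, so the truncated integral is `F (x - ε) - F (x + ε)`. The logarithmic singularity of `F`
at `x` is symmetric and cancels in this difference, which leaves a continuous function of `ε`
vanishing at `ε = 0`. -/

open Real Set Filter Topology

theorem intervalIntegral.integrableOn_deriv_of_nonpos {F f : ℝ → ℝ} {u v : ℝ}
    (hcont : ContinuousOn F (Icc u v)) (hderiv : ∀ t ∈ Ioo u v, HasDerivAt F (f t) t)
    (hf : ∀ t ∈ Ioo u v, f t ≤ 0) : IntegrableOn f (Ioc u v) := by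
  simpa using (integrableOn_deriv_of_nonneg hcont.neg (fun t ht => (hderiv t ht).neg)
    fun t ht => neg_nonneg.2 (hf t ht)).neg

theorem integrableOn_and_integral_Ioo_eq_sub_of_hasDerivAt_of_sign {F f : ℝ → ℝ} {u v : ℝ}
    (huv : u ≤ v) (hcont : ContinuousOn F (Icc u v)) (hderiv : ∀ t ∈ Ioo u v, HasDerivAt F (f t) t)
    (hsign : (∀ t ∈ Ioo u v, 0 ≤ f t) ∨ ∀ t ∈ Ioo u v, f t ≤ 0) :
    IntegrableOn f (Ioo u v) ∧ ∫ t in Ioo u v, f t = F v - F u := by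
  have hint : IntegrableOn f (Ioc u v) :=
    hsign.elim (intervalIntegral.integrableOn_deriv_of_nonneg hcont hderiv)
      (intervalIntegral.integrableOn_deriv_of_nonpos hcont hderiv)
  refine ⟨hint.mono_set Ioo_subset_Ioc_self, ?_⟩
  rw [← integral_Ioc_eq_integral_Ioo, ← intervalIntegral.integral_of_le huv]
  exact intervalIntegral.integral_eq_sub_of_hasDerivAt_of_le huv hcont hderiv
    ((intervalIntegrable_iff_integrableOn_Ioc_of_le huv).2 hint)

theorem setOf_mem_Ioo_and_lt_abs_sub_eq {a b x ε : ℝ} (hε : 0 ≤ ε) (hεa : ε ≤ x - a)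
    (hεb : ε ≤ b - x) :
    {t : ℝ | t ∈ Ioo a b ∧ ε < |t - x|} = Ioo a (x - ε) ∪ Ioo (x + ε) b := by
  ext t
  simp only [mem_ofPred_eq, mem_Ioo, mem_union, lt_abs]
  constructor
  · rintro ⟨⟨hat, htb⟩, h | h⟩
    · exact Or.inr ⟨by linarith, htb⟩
    · exact Or.inl ⟨hat, by linarith⟩
  · rintro (⟨hat, ht⟩ | ⟨ht, htb⟩)
    · exact ⟨⟨hat, by linarith⟩, Or.inr (by linarith)⟩
    · exact ⟨⟨by linarith, htb⟩, Or.inl (by linarith)⟩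

namespace ChebyshevWeight

noncomputable def integrand (a b x t : ℝ) : ℝ := 1 / (√((t - a) * (b - t)) * (x - t))

noncomputable def sqrtSum (a b x t : ℝ) : ℝ := √((t - a) * (b - x)) + √((x - a) * (b - t))

-- `log (t - x)` is `log |t - x|`, so this is a primitive on both sides of `x`. Writing `p`, `q` for
-- the two square roots of `sqrtSum`, `(p + q) (p - q) = (b - a) (t - x)`, so up to a constant this
-- is the classical primitive `log |(p + q) / (p - q)| / √((x-a)(b-x))`.
noncomputable def primitive (a b x t : ℝ) : ℝ :=
  (2 * log (sqrtSum a b x t) - log (t - x)) / √((x - a) * (b - x))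

variable {a b x : ℝ}

theorem sqrtSum_pos (hx : x ∈ Ioo a b) {t : ℝ} (ht : t ∈ Icc a b) : 0 < sqrtSum a b x t := by
  rcases ht.1.eq_or_lt with hat | hat
  · exact add_pos_of_nonneg_of_pos (sqrt_nonneg _)
      (sqrt_pos.2 (mul_pos (sub_pos.2 hx.1) (by linarith [hx.1, hx.2])))
  · exact add_pos_of_pos_of_nonneg (sqrt_pos.2 (mul_pos (sub_pos.2 hat) (sub_pos.2 hx.2)))
      (sqrt_nonneg _)

theorem continuous_sqrtSum : Continuous (sqrtSum a b x) := by
  unfold sqrtSum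
  fun_prop

theorem continuousOn_primitive (hx : x ∈ Ioo a b) {s : Set ℝ} (hs : s ⊆ Icc a b) (hxs : x ∉ s) :
    ContinuousOn (primitive a b x) s := fun _ ht =>
  ContinuousAt.continuousWithinAt <|
    (((continuous_sqrtSum.continuousAt.log (sqrtSum_pos hx (hs ht)).ne').const_mul 2).sub
      ((continuous_id.sub continuous_const).continuousAt.log
        (sub_ne_zero.2 (ht.ne_of_notMem hxs)))).div_const _

theorem hasDerivAt_primitive (hx : x ∈ Ioo a b) {t : ℝ} (ht : t ∈ Ioo a b) (htx : t ≠ x) :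
    HasDerivAt (primitive a b x) (integrand a b x t) t := by
  have hta : 0 < t - a := sub_pos.2 ht.1
  have hbt : 0 < b - t := sub_pos.2 ht.2
  have hxa : 0 < x - a := sub_pos.2 hx.1
  have hbx : 0 < b - x := sub_pos.2 hx.2
  have hpq : √((t - a) * (b - x)) * √((x - a) * (b - t)) =
      √((t - a) * (b - t)) * √((x - a) * (b - x)) := by
    rw [← sqrt_mul (mul_pos hta hbx).le, ← sqrt_mul (mul_pos hta hbt).le]
    ring_nf
  set p := √((t - a) * (b - x))
  set q := √((x - a) * (b - t))
  set W := √((x - a) * (b - x))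
  have hp : HasDerivAt (fun s => √((s - a) * (b - x))) ((b - x) / (2 * p)) t := by
    simpa using (((hasDerivAt_id t).sub_const a).mul_const (b - x)).sqrt (mul_pos hta hbx).ne'
  have hq : HasDerivAt (fun s => √((x - a) * (b - s))) (-(x - a) / (2 * q)) t := by
    simpa using (((hasDerivAt_const t b).sub (hasDerivAt_id t)).const_mul (x - a)).sqrt
      (mul_pos hxa hbt).ne'
  have hS : 0 < p + q := sqrtSum_pos hx (Ioo_subset_Icc_self ht)
  have h : HasDerivAt (primitive a b x)
      ((2 * (((b - x) / (2 * p) + -(x - a) / (2 * q)) / (p + q)) - 1 / (t - x)) / W) t :=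
    ((((hp.add hq).log hS.ne').const_mul 2).sub (((hasDerivAt_id t).sub_const x).log
      (sub_ne_zero.2 htx))).div_const W
  refine h.congr_deriv ?_
  have hp2 : p ^ 2 = (t - a) * (b - x) := sq_sqrt (mul_pos hta hbx).le
  have hq2 : q ^ 2 = (x - a) * (b - t) := sq_sqrt (mul_pos hxa hbt).le
  have hW2 : W ^ 2 = (x - a) * (b - x) := sq_sqrt (mul_pos hxa hbx).le
  have hp0 : 0 < p := sqrt_pos.2 (mul_pos hta hbx)
  have hq0 : 0 < q := sqrt_pos.2 (mul_pos hxa hbt)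
  have hW0 : 0 < W := sqrt_pos.2 (mul_pos hxa hbx)
  have htx' : t - x ≠ 0 := sub_ne_zero.2 htx
  have hxt' : x - t ≠ 0 := sub_ne_zero.2 htx.symm
  rw [integrand, eq_div_of_mul_eq hW0.ne' hpq.symm]
  field_simp
  linear_combination (t - x) * (q * hp2 + p * hq2 - (p + q) * hW2)

theorem primitive_left_eq_right (hx : x ∈ Ioo a b) : primitive a b x a = primitive a b x b := by
  have hxa : 0 < x - a := sub_pos.2 hx.1
  have hbx : 0 < b - x := sub_pos.2 hx.2
  have hba : 0 < b - a := by linarith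
  simp only [primitive, sqrtSum, sub_self, zero_mul, mul_zero, sqrt_zero, zero_add, add_zero]
  rw [log_sqrt (by positivity), log_sqrt (by positivity), log_mul hxa.ne' hba.ne',
    log_mul hba.ne' hbx.ne', show a - x = -(x - a) by ring, log_neg_eq_log]
  ring

theorem integrand_nonneg {t : ℝ} (htx : t ≤ x) : 0 ≤ integrand a b x t :=
  one_div_nonneg.2 (mul_nonneg (sqrt_nonneg _) (sub_nonneg.2 htx))

theorem integrand_nonpos {t : ℝ} (hxt : x ≤ t) : integrand a b x t ≤ 0 :=
  one_div_nonpos.2 (mul_nonpos_of_nonneg_of_nonpos (sqrt_nonneg _) (sub_nonpos.2 hxt))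

theorem integrableOn_and_integral_Ioo_integrand (hx : x ∈ Ioo a b) {u v : ℝ} (hau : a ≤ u)
    (huv : u ≤ v) (hvb : v ≤ b) (hxuv : x ∉ Icc u v) :
    IntegrableOn (integrand a b x) (Ioo u v) ∧
      ∫ t in Ioo u v, integrand a b x t = primitive a b x v - primitive a b x u := by
  have huvab : Icc u v ⊆ Icc a b := Icc_subset_Icc hau hvb
  refine integrableOn_and_integral_Ioo_eq_sub_of_hasDerivAt_of_sign huv
    (continuousOn_primitive hx huvab hxuv) (fun t ht => hasDerivAt_primitive hx
      (Ioo_subset_Ioo hau hvb ht) ((Ioo_subset_Icc_self ht).ne_of_notMem hxuv)) ?_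
  rcases not_and_or.1 hxuv with hxu | hxv
  · exact Or.inr fun t ht => integrand_nonpos (by linarith [ht.1, not_le.1 hxu])
  · exact Or.inl fun t ht => integrand_nonneg (by linarith [ht.2, not_le.1 hxv])

theorem setIntegral_truncated_eq_primitive_sub_primitive (hx : x ∈ Ioo a b) {ε : ℝ}
    (hε : 0 < ε) (hεa : ε < x - a) (hεb : ε < b - x) :
    ∫ t in {t : ℝ | t ∈ Ioo a b ∧ ε < |t - x|}, integrand a b x t
      = primitive a b x (x - ε) - primitive a b x (x + ε) := by
  obtain ⟨hint_left, h_left⟩ := integrableOn_and_integral_Ioo_integrand hx le_rfl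
    (by linarith) (by linarith) (fun h => by linarith [h.2] : x ∉ Icc a (x - ε))
  obtain ⟨hint_right, h_right⟩ := integrableOn_and_integral_Ioo_integrand hx
    (by linarith) (by linarith) le_rfl (fun h => by linarith [h.1] : x ∉ Icc (x + ε) b)
  have hdisj : Disjoint (Ioo a (x - ε)) (Ioo (x + ε) b) :=
    (Ioc_disjoint_Ioc_of_le (by linarith)).mono Ioo_subset_Ioc_self Ioo_subset_Ioc_self
  rw [setOf_mem_Ioo_and_lt_abs_sub_eq hε.le hεa.le hεb.le,
    setIntegral_union hdisj measurableSet_Ioo hint_left hint_right, h_left, h_right,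
    primitive_left_eq_right hx]
  ring

theorem tendsto_primitive_sub_primitive (hx : x ∈ Ioo a b) :
    Tendsto (fun ε => primitive a b x (x - ε) - primitive a b x (x + ε)) (𝓝 0) (𝓝 0) := by
  have hS : sqrtSum a b x x ≠ 0 := (sqrtSum_pos hx (Ioo_subset_Icc_self hx)).ne'
  have hcont : ContinuousAt (fun ε => 2 * (log (sqrtSum a b x (x - ε))
      - log (sqrtSum a b x (x + ε))) / √((x - a) * (b - x))) 0 := by
    refine ((continuousAt_const.mul (ContinuousAt.sub ?_ ?_)).div_const _)
    · exact (continuous_sqrtSum.comp (continuous_sub_left x)).continuousAt.log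
        (by simpa using hS)
    · exact (continuous_sqrtSum.comp (continuous_const_add x)).continuousAt.log
        (by simpa using hS)
  convert hcont.tendsto using 2 with ε
  · rw [primitive, primitive, show x - ε - x = -ε by ring, add_sub_cancel_left, log_neg_eq_log]
    ring
  · simp

end ChebyshevWeight

theorem stmt6_general (a b : ℝ) (x : ℝ) (hx : x ∈ Set.Ioo a b) :
    Filter.Tendsto
      (fun ε : ℝ => ∫ t in {t : ℝ | t ∈ Set.Ioo a b ∧ ε < |t - x|},
        1 / (Real.sqrt ((t - a) * (b - t)) * (x - t)))
      (nhdsWithin 0 (Set.Ioi 0)) (nhds 0) := by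
  have hlim := (ChebyshevWeight.tendsto_primitive_sub_primitive hx).mono_left
    (nhdsWithin_le_nhds (s := Ioi 0))
  refine hlim.congr' ?_
  filter_upwards [Ioo_mem_nhdsGT (lt_min (sub_pos.2 hx.1) (sub_pos.2 hx.2))] with ε hε
  exact (ChebyshevWeight.setIntegral_truncated_eq_primitive_sub_primitive hx hε.1
    (hε.2.trans_le (min_le_left _ _)) (hε.2.trans_le (min_le_right _ _))).symm

/-- For `a < b` and `x ∈ (a,b)`, the principal value
`lim_{ε→0⁺} ∫_{t ∈ (a,b), |t−x|>ε} 1/(√((t−a)(b−t))·(x−t)) dt` vanishes: the function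
`t ↦ 1/√((t−a)(b−t))` is annihilated on `(a,b)` by the truncated Hilbert transform. -/
theorem stmt6 (a b : ℝ) (hab : a < b) (x : ℝ) (hx : x ∈ Set.Ioo a b) :
    Filter.Tendsto
      (fun ε : ℝ => ∫ t in {t : ℝ | t ∈ Set.Ioo a b ∧ ε < |t - x|},
        1 / (Real.sqrt ((t - a) * (b - t)) * (x - t)))
      (nhdsWithin 0 (Set.Ioi 0)) (nhds 0) :=
  stmt6_general a b x hx
end

section
/- Let S and K be nonempty open bounded intervals of ℝ and let h > 0. For every m = (m₁,m₂) ∈ L²(S,ℝ²) and every φ ∈ L²(K), the duality identity ∫_K b₂[m](x) φ(x) dx = ∫_S m₁(t) ((∂ₓP_h) ⋆ φ̃)(t) dt + ∫_S m₂(t) ((∂ₓQ_h) ⋆ φ̃)(t) dt holds; that is, the adjoint of the field operator b₂ is the map b₂*: L²(K) → L²(S,ℝ²) given by b₂*[φ](t) = ( ((∂ₓP_h) ⋆ φ̃)(t), ((∂ₓQ_h) ⋆ φ̃)(t) ) for t ∈ S. -/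
/-!
Both kernels `∂ₓP_h` and `∂ₓQ_h` are bounded by `1 / (π h²)`, and `m₁, m₂, φ̃` are integrable
(they are square integrable and supported on bounded intervals). Hence
`(x, t) ↦ k (x - t) f t g x` is integrable on `ℝ²` and Fubini gives
`∫ (k ⋆ f) g = ∫ f (k(-·) ⋆ g)`. Since `∂ₓP_h` is odd and `∂ₓQ_h` is even, the reflection
absorbs the minus sign in front of the `m₁` term of `b₂` and leaves the `m₂` term unchanged.
-/

open MeasureTheory

lemma integrable_indicator_of_memLp_restrict {α E : Type*} [MeasurableSpace α]
    [NormedAddCommGroup E] {μ : Measure α} {s : Set α} {p : ENNReal} {f : α → E}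
    (hs : MeasurableSet s) (hμs : μ s ≠ ⊤) (hp : 1 ≤ p) (hf : MemLp f p (μ.restrict s)) :
    Integrable (s.indicator f) μ := by
  have : IsFiniteMeasure (μ.restrict s) := isFiniteMeasure_restrict.mpr hμs
  exact IntegrableOn.integrable_indicator (hf.integrable hp) hs

section Convolution

lemma conv_neg_left (k g : ℝ → ℝ) : conv (-k) g = -conv k g := by
  funext x
  simp only [conv, Pi.neg_apply, neg_mul, integral_neg]

variable {k f g : ℝ → ℝ} {C : ℝ}

lemma integrable_kernel_mul_prod (hk : Measurable k) (hC : ∀ x, |k x| ≤ C)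
    (hf : Integrable f) (hg : Integrable g) :
    Integrable (fun z : ℝ × ℝ => k (z.1 - z.2) * f z.2 * g z.1) (volume.prod volume) := by
  have hgf : Integrable (fun z : ℝ × ℝ => g z.1 * f z.2) (volume.prod volume) := hg.mul_prod hf
  refine (hgf.bdd_mul (c := C) (hk.comp measurable_sub).aestronglyMeasurable
    (Filter.Eventually.of_forall fun z => hC _)).congr (Filter.Eventually.of_forall fun z => ?_)
  simp only [Function.comp_apply]
  ring

lemma conv_mul_eq_integral (k f g : ℝ → ℝ) (x : ℝ) :
    conv k f x * g x = ∫ t, k (x - t) * f t * g x := by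
  rw [conv, ← integral_mul_const]

lemma integrable_conv_mul (hk : Measurable k) (hC : ∀ x, |k x| ≤ C)
    (hf : Integrable f) (hg : Integrable g) : Integrable (fun x => conv k f x * g x) := by
  simpa only [conv_mul_eq_integral] using
    (integrable_kernel_mul_prod hk hC hf hg).integral_prod_left

lemma integral_conv_mul (hk : Measurable k) (hC : ∀ x, |k x| ≤ C)
    (hf : Integrable f) (hg : Integrable g) :
    ∫ x, conv k f x * g x = ∫ t, f t * conv (fun x => k (-x)) g t := by
  simp_rw [conv_mul_eq_integral]
  rw [integral_integral_swap (integrable_kernel_mul_prod hk hC hf hg)]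
  congr 1
  funext t
  rw [conv, ← integral_const_mul]
  congr 1
  funext x
  rw [neg_sub]
  ring

lemma integral_conv_mul_of_odd (hk : Measurable k) (hC : ∀ x, |k x| ≤ C)
    (hodd : ∀ x, k (-x) = -k x) (hf : Integrable f) (hg : Integrable g) :
    ∫ x, conv k f x * g x = -∫ t, f t * conv k g t := by
  rw [integral_conv_mul hk hC hf hg, ← integral_neg]
  simp only [hodd]
  rw [← Pi.neg_def, conv_neg_left]
  simp only [Pi.neg_apply, mul_neg]

lemma integral_conv_mul_of_even (hk : Measurable k) (hC : ∀ x, |k x| ≤ C)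
    (heven : ∀ x, k (-x) = k x) (hf : Integrable f) (hg : Integrable g) :
    ∫ x, conv k f x * g x = ∫ t, f t * conv k g t := by
  simp only [integral_conv_mul hk hC hf hg, heven]

end Convolution

section Kernels

variable {h : ℝ}

lemma abs_div_sq_add_sq_sq_le (hh : h ≠ 0) {x N : ℝ} (hN : |N| ≤ x ^ 2 + h ^ 2) :
    |N / (x ^ 2 + h ^ 2) ^ 2| ≤ 1 / h ^ 2 := by
  have hD : 0 < x ^ 2 + h ^ 2 := by positivity
  calc |N / (x ^ 2 + h ^ 2) ^ 2| = |N| / (x ^ 2 + h ^ 2) ^ 2 := by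
        rw [abs_div, abs_of_pos (pow_pos hD 2)]
    _ ≤ (x ^ 2 + h ^ 2) / (x ^ 2 + h ^ 2) ^ 2 := by gcongr
    _ = 1 / (x ^ 2 + h ^ 2) := by field_simp
    _ ≤ 1 / h ^ 2 := by gcongr; nlinarith [sq_nonneg x]

lemma measurable_dPdx (h : ℝ) : Measurable (dPdx h) := by
  unfold dPdx; fun_prop

lemma measurable_dQdx (h : ℝ) : Measurable (dQdx h) := by
  unfold dQdx; fun_prop

lemma dPdx_neg (h x : ℝ) : dPdx h (-x) = -dPdx h x := by
  unfold dPdx; ring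

lemma dQdx_neg (h x : ℝ) : dQdx h (-x) = dQdx h x := by
  unfold dQdx; ring

lemma abs_dPdx_le (hh : h ≠ 0) (x : ℝ) : |dPdx h x| ≤ 1 / Real.pi * (1 / h ^ 2) := by
  rw [dPdx, mul_div_assoc, abs_mul, abs_neg, abs_of_pos (by positivity)]
  refine mul_le_mul_of_nonneg_left (abs_div_sq_add_sq_sq_le hh ?_) (by positivity)
  rw [abs_le]
  constructor <;> nlinarith [sq_nonneg (x + h), sq_nonneg (x - h)]

lemma abs_dQdx_le (hh : h ≠ 0) (x : ℝ) : |dQdx h x| ≤ 1 / Real.pi * (1 / h ^ 2) := by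
  rw [dQdx, mul_div_assoc, abs_mul, abs_of_pos (by positivity)]
  refine mul_le_mul_of_nonneg_left (abs_div_sq_add_sq_sq_le hh ?_) (by positivity)
  rw [abs_le]
  constructor <;> nlinarith [sq_nonneg x, sq_nonneg h]

end Kernels

theorem stmt7_general (a b c d h : ℝ) (hh : 0 < h)
    (m₁ m₂ : ℝ → ℝ) (hm₁ : MemLp m₁ 2 volume) (hm₂ : MemLp m₂ 2 volume)
    (hm₁S : ∀ t ∉ Set.Ioo a b, m₁ t = 0) (hm₂S : ∀ t ∉ Set.Ioo a b, m₂ t = 0)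
    (φ : ℝ → ℝ) (hφ : MemLp φ 2 (volume.restrict (Set.Ioo c d))) :
    ∫ x in Set.Ioo c d, (-conv (dPdx h) m₁ x + conv (dQdx h) m₂ x) * φ x
      = (∫ t in Set.Ioo a b, m₁ t * conv (dPdx h) ((Set.Ioo c d).indicator φ) t)
        + ∫ t in Set.Ioo a b, m₂ t * conv (dQdx h) ((Set.Ioo c d).indicator φ) t := by
  have integrable_of_supported {m : ℝ → ℝ} (hm : MemLp m 2 volume)
      (hmS : ∀ t ∉ Set.Ioo a b, m t = 0) : Integrable m := by
    rw [← Set.indicator_eq_self.mpr (Function.support_subset_iff'.mpr hmS)]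
    exact integrable_indicator_of_memLp_restrict measurableSet_Ioo (by simp) one_le_two
      (hm.restrict _)
  have hm₁i := integrable_of_supported hm₁ hm₁S
  have hm₂i := integrable_of_supported hm₂ hm₂S
  have hφi : Integrable ((Set.Ioo c d).indicator φ) :=
    integrable_indicator_of_memLp_restrict measurableSet_Ioo (by simp) one_le_two hφ
  have hP := abs_dPdx_le hh.ne'
  have hQ := abs_dQdx_le hh.ne'
  rw [← integral_indicator measurableSet_Ioo,
    setIntegral_eq_integral_of_forall_compl_eq_zero fun t ht => by simp [hm₁S t ht],
    setIntegral_eq_integral_of_forall_compl_eq_zero fun t ht => by simp [hm₂S t ht]]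
  simp_rw [Set.indicator_mul_right, add_mul, neg_mul]
  rw [integral_add (integrable_conv_mul (measurable_dPdx h) hP hm₁i hφi).fun_neg
      (integrable_conv_mul (measurable_dQdx h) hQ hm₂i hφi), integral_neg,
    integral_conv_mul_of_odd (measurable_dPdx h) hP (dPdx_neg h) hm₁i hφi,
    integral_conv_mul_of_even (measurable_dQdx h) hQ (dQdx_neg h) hm₂i hφi, neg_neg]

/-- Duality identity defining the adjoint `b₂*` of the field operator `b₂`:
for `m = (m₁,m₂) ∈ L²(S,ℝ²)` (extended by zero off `S = (a,b)`) and `φ ∈ L²(K)`,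
`∫_K b₂[m] φ = ∫_S m₁ ((∂ₓP_h) ⋆ φ̃) + ∫_S m₂ ((∂ₓQ_h) ⋆ φ̃)`. -/
theorem stmt7 (a b c d h : ℝ) (hab : a < b) (hcd : c < d) (hh : 0 < h)
    (m₁ m₂ : ℝ → ℝ) (hm₁ : MemLp m₁ 2 volume) (hm₂ : MemLp m₂ 2 volume)
    (hm₁S : ∀ t ∉ Set.Ioo a b, m₁ t = 0) (hm₂S : ∀ t ∉ Set.Ioo a b, m₂ t = 0)
    (φ : ℝ → ℝ) (hφ : MemLp φ 2 (volume.restrict (Set.Ioo c d))) :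
    ∫ x in Set.Ioo c d, (-conv (dPdx h) m₁ x + conv (dQdx h) m₂ x) * φ x
      = (∫ t in Set.Ioo a b, m₁ t * conv (dPdx h) ((Set.Ioo c d).indicator φ) t)
        + ∫ t in Set.Ioo a b, m₂ t * conv (dQdx h) ((Set.Ioo c d).indicator φ) t :=
  stmt7_general a b c d h hh m₁ m₂ hm₁ hm₂ hm₁S hm₂S φ hφ
end

section
/- Let S and K be nonempty open bounded intervals of ℝ and let h > 0. The field operator b₂ is bounded from L²(S,ℝ²) to L²(K): there exists a constant C > 0 such that for every m = (m₁,m₂) ∈ L²(S,ℝ²), ‖ x ↦ −((∂ₓP_h) ⋆ m̃₁)(x) + ((∂ₓQ_h) ⋆ m̃₂)(x) ‖_{L²(K)} ≤ C ‖m‖_{L²(S,ℝ²)}. -/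
/-!
Both kernels `∂ₓP_h` and `∂ₓQ_h` are bounded by `π⁻¹ (x² + h²)⁻¹`, so they lie in `L²(ℝ)`.
By Cauchy–Schwarz each convolution `k ⋆ m` is then bounded pointwise by `‖k‖₂ ‖m‖₂`, and a
function bounded by `B` has `L²(K)`-norm at most `|K|^{1/2} B`.
-/

open MeasureTheory

open scoped ENNReal

lemma ENNReal.le_rpow_half_sq_add_sq (x y : ℝ≥0∞) : x ≤ (x ^ 2 + y ^ 2) ^ (1 / 2 : ℝ) :=
  calc x = (x ^ 2) ^ (1 / 2 : ℝ) := by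
        rw [← ENNReal.rpow_natCast, ← ENNReal.rpow_mul]; norm_num
    _ ≤ (x ^ 2 + y ^ 2) ^ (1 / 2 : ℝ) := by gcongr; exact le_self_add

theorem enorm_conv_le_eLpNorm_mul_eLpNorm {k m : ℝ → ℝ} (hk : AEStronglyMeasurable k)
    (hm : AEStronglyMeasurable m) (x : ℝ) :
    ‖conv k m x‖ₑ ≤ eLpNorm k 2 volume * eLpNorm m 2 volume := by
  have hshift : MeasurePreserving (fun t : ℝ => x - t) volume volume :=
    Measure.measurePreserving_sub_left volume x
  calc ‖conv k m x‖ₑ ≤ eLpNorm (fun t => k (x - t) * m t) 1 volume := by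
        rw [eLpNorm_one_eq_lintegral_enorm]; exact enorm_integral_le_lintegral_enorm _
    _ ≤ eLpNorm (fun t => k (x - t)) 2 volume * eLpNorm m 2 volume := by
        simpa [Function.comp_def] using eLpNorm_le_eLpNorm_mul_eLpNorm'_of_norm (r := 1)
          (hk.comp_measurePreserving hshift) hm (· * ·) 1
          (Filter.Eventually.of_forall fun t => by simp [norm_mul])
    _ = eLpNorm k 2 volume * eLpNorm m 2 volume := by
        rw [← eLpNorm_comp_measurePreserving hk hshift]; rfl

theorem eLpNorm_neg_conv_add_conv_le (μ : Measure ℝ) {k₁ k₂ m₁ m₂ : ℝ → ℝ}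
    (hk₁ : AEStronglyMeasurable k₁) (hk₂ : AEStronglyMeasurable k₂)
    (hm₁ : AEStronglyMeasurable m₁) (hm₂ : AEStronglyMeasurable m₂) :
    eLpNorm (fun x => -conv k₁ m₁ x + conv k₂ m₂ x) 2 μ ≤
      (eLpNorm k₁ 2 volume + eLpNorm k₂ 2 volume) * μ Set.univ ^ (1 / 2 : ℝ) *
        (eLpNorm m₁ 2 volume ^ 2 + eLpNorm m₂ 2 volume ^ 2) ^ (1 / 2 : ℝ) := by
  set N := (eLpNorm m₁ 2 volume ^ 2 + eLpNorm m₂ 2 volume ^ 2) ^ (1 / 2 : ℝ)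
  have hpointwise : ∀ x, ‖-conv k₁ m₁ x + conv k₂ m₂ x‖ₑ ≤
      (eLpNorm k₁ 2 volume + eLpNorm k₂ 2 volume) * N := fun x =>
    calc ‖-conv k₁ m₁ x + conv k₂ m₂ x‖ₑ ≤ ‖conv k₁ m₁ x‖ₑ + ‖conv k₂ m₂ x‖ₑ := by
          simpa only [enorm_neg] using enorm_add_le (-conv k₁ m₁ x) (conv k₂ m₂ x)
      _ ≤ eLpNorm k₁ 2 volume * eLpNorm m₁ 2 volume + eLpNorm k₂ 2 volume * eLpNorm m₂ 2 volume :=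
          add_le_add (enorm_conv_le_eLpNorm_mul_eLpNorm hk₁ hm₁ x)
            (enorm_conv_le_eLpNorm_mul_eLpNorm hk₂ hm₂ x)
      _ ≤ eLpNorm k₁ 2 volume * N + eLpNorm k₂ 2 volume * N := by
          gcongr
          · exact ENNReal.le_rpow_half_sq_add_sq _ _
          · exact (ENNReal.le_rpow_half_sq_add_sq _ _).trans_eq (by rw [add_comm])
      _ = (eLpNorm k₁ 2 volume + eLpNorm k₂ 2 volume) * N := (add_mul _ _ _).symm
  refine (eLpNorm_le_of_ae_enorm_bound (Filter.Eventually.of_forall hpointwise)).trans_eq ?_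
  rw [smul_eq_mul, mul_right_comm]
  norm_num

lemma integrable_inv_sq_add_sq {h : ℝ} (hh : h ≠ 0) :
    Integrable fun x : ℝ => (x ^ 2 + h ^ 2)⁻¹ := by
  refine (integrable_inv_one_add_sq.comp_div hh |>.const_mul (h ^ 2)⁻¹).congr
    (Filter.Eventually.of_forall fun x => ?_)
  field_simp
  ring

lemma memLp_two_inv_sq_add_sq {h : ℝ} (hh : h ≠ 0) :
    MemLp (fun x : ℝ => (x ^ 2 + h ^ 2)⁻¹) 2 volume := by
  rw [memLp_two_iff_integrable_sq (by fun_prop)]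
  simp_rw [sq ((_ : ℝ)⁻¹)]
  refine (integrable_inv_sq_add_sq hh).bdd_mul (c := (h ^ 2)⁻¹) (by fun_prop)
    (Filter.Eventually.of_forall fun x => ?_)
  rw [norm_inv, Real.norm_of_nonneg (by positivity)]
  gcongr
  exact le_add_of_nonneg_left (sq_nonneg x)

lemma abs_mul_div_sq_le {c u D : ℝ} (hD : 0 < D) (hu : |u| ≤ D) :
    |c * u / D ^ 2| ≤ |c| * D⁻¹ := by
  rw [abs_div, abs_of_pos (pow_pos hD 2), abs_mul, mul_div_assoc]
  gcongr
  rw [div_le_iff₀ (by positivity)]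
  calc |u| ≤ D := hu
    _ = D⁻¹ * D ^ 2 := by field_simp

lemma memLp_two_of_abs_le_inv_sq_add_sq {f : ℝ → ℝ} {h : ℝ} (hh : h ≠ 0) (C : ℝ)
    (hf : Measurable f) (hb : ∀ x, |f x| ≤ C * (x ^ 2 + h ^ 2)⁻¹) : MemLp f 2 volume :=
  ((memLp_two_inv_sq_add_sq hh).const_mul C).of_le hf.aestronglyMeasurable
    (Filter.Eventually.of_forall fun x => by
      simp only [Real.norm_eq_abs]
      exact (hb x).trans (le_abs_self _))

lemma memLp_dPdx {h : ℝ} (hh : h ≠ 0) : MemLp (dPdx h) 2 volume := by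
  refine memLp_two_of_abs_le_inv_sq_add_sq hh |-(1 / Real.pi)| (by unfold dPdx; fun_prop)
    fun x => abs_mul_div_sq_le (by positivity) ?_
  rw [abs_le]
  constructor <;> nlinarith [sq_nonneg (x + h), sq_nonneg (x - h)]

lemma memLp_dQdx {h : ℝ} (hh : h ≠ 0) : MemLp (dQdx h) 2 volume := by
  refine memLp_two_of_abs_le_inv_sq_add_sq hh |1 / Real.pi| (by unfold dQdx; fun_prop)
    fun x => abs_mul_div_sq_le (by positivity) ?_
  rw [abs_le]
  constructor <;> nlinarith [sq_nonneg x, sq_nonneg h]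

theorem stmt13_general (a b c d h : ℝ) (hh : 0 < h) :
    ∃ C : ℝ, 0 < C ∧ ∀ m₁ m₂ : ℝ → ℝ, MemLp m₁ 2 volume → MemLp m₂ 2 volume →
      (∀ t ∉ Set.Ioo a b, m₁ t = 0) → (∀ t ∉ Set.Ioo a b, m₂ t = 0) →
      eLpNorm (fun x => -conv (dPdx h) m₁ x + conv (dQdx h) m₂ x) 2
          (volume.restrict (Set.Ioo c d))
        ≤ ENNReal.ofReal C *
          (((eLpNorm m₁ 2 volume) ^ 2 + (eLpNorm m₂ 2 volume) ^ 2) ^ (1/2 : ℝ)) := by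
  have hP := memLp_dPdx hh.ne'
  have hQ := memLp_dQdx hh.ne'
  set B := (eLpNorm (dPdx h) 2 volume + eLpNorm (dQdx h) 2 volume) *
    volume.restrict (Set.Ioo c d) Set.univ ^ (1 / 2 : ℝ)
  have hB : B ≠ ∞ := ENNReal.mul_ne_top
    (ENNReal.add_ne_top.2 ⟨hP.eLpNorm_ne_top, hQ.eLpNorm_ne_top⟩)
    (ENNReal.rpow_ne_top_of_nonneg (by norm_num) (by simp [Real.volume_Ioo]))
  refine ⟨B.toReal + 1, by positivity, fun m₁ m₂ hm₁ hm₂ _ _ => ?_⟩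
  calc _ ≤ B * _ := eLpNorm_neg_conv_add_conv_le _ hP.1 hQ.1 hm₁.1 hm₂.1
    _ ≤ _ := by
        gcongr
        rw [ENNReal.ofReal_add (by positivity) zero_le_one, ENNReal.ofReal_toReal hB]
        exact le_self_add

/-- Boundedness of `b₂ : L²(S,ℝ²) → L²(K)`: there is `C > 0` with
`‖b₂[m]‖_{L²(K)} ≤ C ‖m‖_{L²(S,ℝ²)}` for all `m`, where
`‖m‖_{L²(S,ℝ²)} = (‖m₁‖² + ‖m₂‖²)^{1/2}`. Here `S = (a,b)`, `K = (c,d)`. -/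
theorem stmt13 (a b c d h : ℝ) (hab : a < b) (hcd : c < d) (hh : 0 < h) :
    ∃ C : ℝ, 0 < C ∧ ∀ m₁ m₂ : ℝ → ℝ, MemLp m₁ 2 volume → MemLp m₂ 2 volume →
      (∀ t ∉ Set.Ioo a b, m₁ t = 0) → (∀ t ∉ Set.Ioo a b, m₂ t = 0) →
      eLpNorm (fun x => -conv (dPdx h) m₁ x + conv (dQdx h) m₂ x) 2
          (volume.restrict (Set.Ioo c d))
        ≤ ENNReal.ofReal C *
          (((eLpNorm m₁ 2 volume) ^ 2 + (eLpNorm m₂ 2 volume) ^ 2) ^ (1/2 : ℝ)) :=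
  stmt13_general a b c d h hh
end

section
/- Let S and K be nonempty open bounded intervals of ℝ, let h > 0, and let e ∈ L²(S,ℝ²) with e not in the range b₂*[L²(K)]. If (φ_n) is a sequence in L²(K) such that ‖b₂*[φ_n] − e‖_{L²(S,ℝ²)} → 0 as n → ∞, then ‖φ_n‖_{L²(K)} → ∞; that is, the unconstrained approximation problem is ill-posed and any minimizing sequence diverges in norm. -/
/-!
With bounded continuous kernels and intervals of finite length, `φ ↦ b₂*[φ]` is a bounded
operator `T : L²(K) → L²(S) × L²(S)` (it even lands in bounded continuous functions). If
`‖φₙ‖` did not tend to `∞`, the `φₙ` would stay bounded along some ultrafilter `U` on `ℕ`, hence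
converge weakly along `U` to some `ψ` (Banach–Alaoglu). A bounded operator is weakly continuous,
so `T φₙ ⇀ T ψ` along `U`, while `T φₙ → e` in norm; thus `e = T ψ` lies in the range.
-/

open MeasureTheory

open Filter Set Topology
open scoped ENNReal InnerProductSpace BoundedContinuousFunction

section WeakLimits

variable {H F ι : Type*} [NormedAddCommGroup H] [InnerProductSpace ℝ H] [CompleteSpace H]
  [NormedAddCommGroup F] [NormedSpace ℝ F]

theorem exists_tendsto_inner_of_eventually_norm_le (U : Ultrafilter ι) {x : ι → H} {C : ℝ}
    (hx : ∀ᶠ i in U, ‖x i‖ ≤ C) :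
    ∃ ψ : H, ∀ y, Tendsto (fun i => ⟪x i, y⟫_ℝ) U (𝓝 ⟪ψ, y⟫_ℝ) := by
  -- Banach–Alaoglu in `H* ≃ H`
  let f : ι → WeakDual ℝ H := fun i => StrongDual.toWeakDual (InnerProductSpace.toDual ℝ H (x i))
  have hf : (↑(U.map f) : Filter (WeakDual ℝ H)) ≤
      𝓟 (WeakDual.toStrongDual ⁻¹' Metric.closedBall 0 C) := by
    rw [Ultrafilter.coe_map, le_principal_iff, mem_map]
    filter_upwards [hx] with i hi
    simpa [f] using hi
  obtain ⟨ℓ, -, hℓ⟩ := (WeakDual.isCompact_closedBall 0 C).ultrafilter_le_nhds _ hf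
  refine ⟨(InnerProductSpace.toDual ℝ H).symm (WeakDual.toStrongDual ℓ), fun y => ?_⟩
  rw [InnerProductSpace.toDual_symm_apply]
  exact tendsto_iff_forall_eval_tendsto_topDualPairing.mp hℓ y

theorem ContinuousLinearMap.apply_eq_of_tendsto_inner (T : H →L[ℝ] F) {l : Filter ι} [l.NeBot]
    {x : ι → H} {ψ : H} {z : F} (hx : ∀ y, Tendsto (fun i => ⟪x i, y⟫_ℝ) l (𝓝 ⟪ψ, y⟫_ℝ))
    (hTx : Tendsto (fun i => T (x i)) l (𝓝 z)) : T ψ = z := by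
  refine (SeparatingDual.eq_iff_forall_dual_eq (R := ℝ)).2 fun g => ?_
  set w := (InnerProductSpace.toDual ℝ H).symm (g ∘L T)
  have hw : ∀ v, g (T v) = ⟪v, w⟫_ℝ := fun v => by
    rw [real_inner_comm, InnerProductSpace.toDual_symm_apply]; rfl
  refine tendsto_nhds_unique ?_ ((g.continuous.tendsto z).comp hTx)
  simp only [Function.comp_def, hw]
  exact hx w

theorem ContinuousLinearMap.tendsto_norm_atTop_of_tendsto_of_notMem_range (T : H →L[ℝ] F)
    {l : Filter ι} {x : ι → H} {z : F} (hz : z ∉ range T)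
    (hTx : Tendsto (fun i => T (x i)) l (𝓝 z)) : Tendsto (fun i => ‖x i‖) l atTop := by
  by_contra hx
  obtain ⟨C, hC⟩ : ∃ C, ∃ᶠ i in l, ‖x i‖ ≤ C := by
    simp only [tendsto_atTop, not_forall, not_eventually, not_le] at hx
    obtain ⟨C, hC⟩ := hx
    exact ⟨C, hC.mono fun _ => le_of_lt⟩
  obtain ⟨U, hU⟩ := exists_ultrafilter_iff.2 (frequently_iff_neBot.mp hC)
  obtain ⟨ψ, hψ⟩ :=
    exists_tendsto_inner_of_eventually_norm_le U (le_principal_iff.mp (hU.trans inf_le_right))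
  exact hz ⟨ψ, T.apply_eq_of_tendsto_inner hψ (hTx.mono_left (hU.trans inf_le_left))⟩

end WeakLimits

theorem Lp.integral_norm_le {E α : Type*} [NormedAddCommGroup E] [MeasurableSpace α]
    {ν : Measure α} [IsFiniteMeasure ν] {p : ℝ≥0∞} (hp : 1 ≤ p) (φ : Lp E p ν) :
    ∫ t, ‖φ t‖ ∂ν ≤ (ν univ ^ (1 - 1 / p.toReal)).toReal * ‖φ‖ := by
  have hexp : 0 ≤ 1 - 1 / p.toReal := by
    rcases eq_or_ne p ∞ with rfl | hp_top
    · simp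
    · have : 1 ≤ p.toReal := by simpa using ENNReal.toReal_mono hp_top hp
      rw [sub_nonneg]; exact div_le_one_of_le₀ this (zero_le_one.trans this)
  have h := eLpNorm_le_eLpNorm_mul_rpow_measure_univ hp (Lp.aestronglyMeasurable φ)
  rw [integral_norm_eq_lintegral_enorm (Lp.aestronglyMeasurable φ),
    ← eLpNorm_one_eq_lintegral_enorm, Lp.norm_def, mul_comm, ← ENNReal.toReal_mul]
  refine ENNReal.toReal_mono (ENNReal.mul_ne_top (Lp.eLpNorm_ne_top φ) ?_) (by simpa using h)
  exact ENNReal.rpow_ne_top_of_nonneg hexp (measure_ne_top ν univ)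

theorem ENNReal.tendsto_nhds_zero_of_tendsto_rpow_half_sq_add_sq {ι : Type*} {l : Filter ι}
    {f g : ι → ℝ≥0∞} (h : Tendsto (fun i => (f i ^ 2 + g i ^ 2) ^ (1 / 2 : ℝ)) l (𝓝 0)) :
    Tendsto f l (𝓝 0) := by
  refine tendsto_of_tendsto_of_tendsto_of_le_of_le tendsto_const_nhds h (fun _ => zero_le)
    fun i => ?_
  calc f i = (f i ^ 2) ^ (1 / 2 : ℝ) := by
        rw [← ENNReal.rpow_natCast, ← ENNReal.rpow_mul]; norm_num
    _ ≤ (f i ^ 2 + g i ^ 2) ^ (1 / 2 : ℝ) := ENNReal.rpow_le_rpow le_self_add (by norm_num)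

theorem Lp.tendsto_toLp_of_tendsto_eLpNorm_sub {ι α E : Type*} [MeasurableSpace α]
    [NormedAddCommGroup E] {μ : Measure α} {p : ℝ≥0∞} [Fact (1 ≤ p)] {l : Filter ι}
    {u : ι → Lp E p μ} {f : ι → α → E} (hu : ∀ i, u i =ᵐ[μ] f i) {e : α → E} (he : MemLp e p μ)
    (h : Tendsto (fun i => eLpNorm (fun x => f i x - e x) p μ) l (𝓝 0)) :
    Tendsto u l (𝓝 (he.toLp e)) :=
  (Lp.tendsto_Lp_iff_tendsto_eLpNorm u e he).2 <|
    h.congr fun i => eLpNorm_congr_ae ((hu i).sub (EventuallyEq.refl _ e)).symm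

section KernelOperator

variable {k : ℝ → ℝ} {B : ℝ} {ν : Measure ℝ} {f : ℝ → ℝ}

theorem integrable_comp_sub_mul (hk : Continuous k) (hB : ∀ x, ‖k x‖ ≤ B) (hf : Integrable f ν)
    (x : ℝ) : Integrable (fun t => k (x - t) * f t) ν :=
  hf.bdd_mul (by fun_prop : Continuous fun t => k (x - t)).aestronglyMeasurable
    (ae_of_all _ fun _ => hB _)

theorem continuous_integral_comp_sub_mul (hk : Continuous k) (hB : ∀ x, ‖k x‖ ≤ B)
    (hf : Integrable f ν) : Continuous fun x => ∫ t, k (x - t) * f t ∂ν :=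
  continuous_of_dominated (fun x => (integrable_comp_sub_mul hk hB hf x).aestronglyMeasurable)
    (fun x => ae_of_all _ fun t => by rw [norm_mul]; gcongr; exact hB _)
    (hf.norm.const_mul B) (ae_of_all _ fun t => by fun_prop)

theorem norm_integral_comp_sub_mul_le (hB : ∀ x, ‖k x‖ ≤ B) (hf : Integrable f ν) (x : ℝ) :
    ‖∫ t, k (x - t) * f t ∂ν‖ ≤ B * ∫ t, ‖f t‖ ∂ν := by
  rw [← integral_const_mul]
  exact norm_integral_le_of_norm_le (hf.norm.const_mul B)
    (ae_of_all _ fun t => by rw [norm_mul]; gcongr; exact hB _)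

theorem exists_clm_ae_eq_integral_comp_sub_mul [IsFiniteMeasure ν] {p : ℝ≥0∞} [Fact (1 ≤ p)]
    (hk : Continuous k) (hB : ∀ x, ‖k x‖ ≤ B) (q : ℝ≥0∞) [Fact (1 ≤ q)] (μ : Measure ℝ)
    [IsFiniteMeasure μ] :
    ∃ T : Lp ℝ p ν →L[ℝ] Lp ℝ q μ, ∀ φ, T φ =ᵐ[μ] fun x => ∫ t, k (x - t) * φ t ∂ν := by
  have hint (φ : Lp ℝ p ν) : Integrable φ ν := (Lp.memLp φ).integrable Fact.out
  set c := (ν univ ^ (1 - 1 / p.toReal)).toReal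
  have hB0 : 0 ≤ B := (norm_nonneg _).trans (hB 0)
  have hbound (φ : Lp ℝ p ν) (x : ℝ) : ‖∫ t, k (x - t) * φ t ∂ν‖ ≤ B * c * ‖φ‖ := by
    rw [mul_assoc]
    exact (norm_integral_comp_sub_mul_le hB (hint φ) x).trans
      (mul_le_mul_of_nonneg_left (Lp.integral_norm_le Fact.out φ) hB0)
  let A : Lp ℝ p ν →ₗ[ℝ] (ℝ →ᵇ ℝ) :=
    { toFun := fun φ => .ofNormedAddCommGroup _
        (continuous_integral_comp_sub_mul hk hB (hint φ)) _ (hbound φ)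
      map_add' := fun φ ψ => by
        ext x
        rw [BoundedContinuousFunction.add_apply]
        simp only [BoundedContinuousFunction.coe_ofNormedAddCommGroup]
        rw [← integral_add (integrable_comp_sub_mul hk hB (hint φ) x)
          (integrable_comp_sub_mul hk hB (hint ψ) x)]
        refine integral_congr_ae ?_
        filter_upwards [Lp.coeFn_add φ ψ] with t ht
        rw [ht, Pi.add_apply, mul_add]
      map_smul' := fun r φ => by
        ext x
        rw [RingHom.id_apply, BoundedContinuousFunction.smul_apply]
        simp only [BoundedContinuousFunction.coe_ofNormedAddCommGroup, smul_eq_mul]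
        rw [← integral_const_mul]
        refine integral_congr_ae ?_
        filter_upwards [Lp.coeFn_smul r φ] with t ht
        rw [ht, Pi.smul_apply, smul_eq_mul, mul_left_comm] }
  refine ⟨(BoundedContinuousFunction.toLp q μ ℝ).comp (A.mkContinuous (B * c) fun φ => ?_),
    fun φ => BoundedContinuousFunction.coeFn_toLp q μ ℝ (A φ)⟩
  exact BoundedContinuousFunction.norm_ofNormedAddCommGroup_le _
    (mul_nonneg (mul_nonneg hB0 ENNReal.toReal_nonneg) (norm_nonneg φ)) (hbound φ)

theorem conv_indicator_eq {K : Set ℝ} (hK : MeasurableSet K) (k f : ℝ → ℝ) :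
    conv k (K.indicator f) = fun x => ∫ t, k (x - t) * f t ∂(volume.restrict K) := by
  ext x
  rw [conv, ← integral_indicator hK]
  congr 1 with t
  exact (indicator_mul_right K (fun t => k (x - t)) f).symm

theorem exists_clm_ae_eq_conv_indicator {K : Set ℝ} (hK : MeasurableSet K)
    (hKfin : volume K ≠ ∞) {p : ℝ≥0∞} [Fact (1 ≤ p)] (hk : Continuous k) (hB : ∀ x, ‖k x‖ ≤ B)
    (q : ℝ≥0∞) [Fact (1 ≤ q)] (μ : Measure ℝ) [IsFiniteMeasure μ] :
    ∃ T : Lp ℝ p (volume.restrict K) →L[ℝ] Lp ℝ q μ, ∀ φ, T φ =ᵐ[μ] conv k (K.indicator φ) := by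
  have : IsFiniteMeasure (volume.restrict K) := isFiniteMeasure_restrict.2 hKfin
  simpa only [conv_indicator_eq hK] using exists_clm_ae_eq_integral_comp_sub_mul hk hB q μ

end KernelOperator

section PoissonKernels

variable {h : ℝ}

theorem abs_inv_pi_mul_div_sq_le {N D : ℝ} (hh : 0 < h) (hN : |N| ≤ D) (hD : h ^ 2 ≤ D) :
    |1 / Real.pi * N / D ^ 2| ≤ 1 / (Real.pi * h ^ 2) := by
  have hD0 : 0 < D := (by positivity : 0 < h ^ 2).trans_le hD
  rw [abs_div, abs_mul, abs_of_pos (by positivity : 0 < 1 / Real.pi),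
    abs_of_pos (by positivity : 0 < D ^ 2),
    div_le_div_iff₀ (by positivity) (by positivity)]
  calc 1 / Real.pi * |N| * (Real.pi * h ^ 2) = |N| * h ^ 2 := by field_simp
    _ ≤ D * D := by gcongr
    _ = 1 * D ^ 2 := by ring

theorem continuous_dPdx (hh : 0 < h) : Continuous (dPdx h) := by
  unfold dPdx
  exact Continuous.div (by fun_prop) (by fun_prop) fun x => by positivity

theorem continuous_dQdx (hh : 0 < h) : Continuous (dQdx h) := by
  unfold dQdx
  exact Continuous.div (by fun_prop) (by fun_prop) fun x => by positivity

theorem norm_dPdx_le (hh : 0 < h) (x : ℝ) : ‖dPdx h x‖ ≤ 1 / (Real.pi * h ^ 2) := by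
  have h2xh : |-(2 * x * h)| ≤ x ^ 2 + h ^ 2 := by
    rw [abs_neg, abs_le]; constructor <;> nlinarith [sq_nonneg (x + h), sq_nonneg (x - h)]
  have := abs_inv_pi_mul_div_sq_le hh h2xh (by nlinarith [sq_nonneg x])
  rwa [Real.norm_eq_abs, dPdx, neg_mul_comm]

theorem norm_dQdx_le (hh : 0 < h) (x : ℝ) : ‖dQdx h x‖ ≤ 1 / (Real.pi * h ^ 2) := by
  have hN : |h ^ 2 - x ^ 2| ≤ x ^ 2 + h ^ 2 := by
    rw [abs_le]; constructor <;> nlinarith [sq_nonneg x, sq_nonneg h]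
  exact abs_inv_pi_mul_div_sq_le hh hN (by nlinarith [sq_nonneg x])

end PoissonKernels

theorem stmt16_general (a b c d h : ℝ) (hh : 0 < h)
    (e₁ e₂ : ℝ → ℝ) (he₁ : MemLp e₁ 2 (volume.restrict (Set.Ioo a b)))
    (he₂ : MemLp e₂ 2 (volume.restrict (Set.Ioo a b)))
    (hnr : ¬ ∃ ψ : Lp ℝ 2 (volume.restrict (Set.Ioo c d)),
      e₁ =ᵐ[volume.restrict (Set.Ioo a b)] conv (dPdx h) ((Set.Ioo c d).indicator ⇑ψ) ∧
      e₂ =ᵐ[volume.restrict (Set.Ioo a b)] conv (dQdx h) ((Set.Ioo c d).indicator ⇑ψ))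
    (φn : ℕ → Lp ℝ 2 (volume.restrict (Set.Ioo c d)))
    (hconv : Filter.Tendsto
      (fun n => ((eLpNorm (fun t => conv (dPdx h) ((Set.Ioo c d).indicator ⇑(φn n)) t - e₁ t) 2
            (volume.restrict (Set.Ioo a b))) ^ 2
          + (eLpNorm (fun t => conv (dQdx h) ((Set.Ioo c d).indicator ⇑(φn n)) t - e₂ t) 2
            (volume.restrict (Set.Ioo a b))) ^ 2) ^ (1/2 : ℝ))
      Filter.atTop (nhds 0)) :
    Filter.Tendsto (fun n => ‖φn n‖) Filter.atTop Filter.atTop := by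
  obtain ⟨TP, hTP⟩ := exists_clm_ae_eq_conv_indicator (p := 2) measurableSet_Ioo
    measure_Ioo_lt_top.ne (continuous_dPdx hh) (norm_dPdx_le hh) 2 (volume.restrict (Ioo a b))
  obtain ⟨TQ, hTQ⟩ := exists_clm_ae_eq_conv_indicator (p := 2) measurableSet_Ioo
    measure_Ioo_lt_top.ne (continuous_dQdx hh) (norm_dQdx_le hh) 2 (volume.restrict (Ioo a b))
  have hP := Lp.tendsto_toLp_of_tendsto_eLpNorm_sub (fun n => hTP (φn n)) he₁
    (ENNReal.tendsto_nhds_zero_of_tendsto_rpow_half_sq_add_sq hconv)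
  have hQ := Lp.tendsto_toLp_of_tendsto_eLpNorm_sub (fun n => hTQ (φn n)) he₂
    (ENNReal.tendsto_nhds_zero_of_tendsto_rpow_half_sq_add_sq
      (by simpa only [add_comm] using hconv))
  refine (TP.prod TQ).tendsto_norm_atTop_of_tendsto_of_notMem_range ?_ (hP.prodMk_nhds hQ)
  rintro ⟨ψ, hψ⟩
  rw [ContinuousLinearMap.prod_apply, Prod.mk.injEq] at hψ
  obtain ⟨hPψ, hQψ⟩ := hψ
  exact hnr ⟨ψ, he₁.coeFn_toLp.symm.trans (hPψ ▸ hTP ψ),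
    he₂.coeFn_toLp.symm.trans (hQψ ▸ hTQ ψ)⟩

/-- Ill-posedness of the unconstrained problem: if `e = (e₁,e₂) ∉ Ran b₂*` and `(φₙ)` is a
sequence in `L²(K)` with `‖b₂*[φₙ] − e‖_{L²(S,ℝ²)} → 0`, then `‖φₙ‖_{L²(K)} → ∞`.
Here `S = (a,b)`, `K = (c,d)`. -/
theorem stmt16 (a b c d h : ℝ) (hab : a < b) (hcd : c < d) (hh : 0 < h)
    (e₁ e₂ : ℝ → ℝ) (he₁ : MemLp e₁ 2 (volume.restrict (Set.Ioo a b)))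
    (he₂ : MemLp e₂ 2 (volume.restrict (Set.Ioo a b)))
    (hnr : ¬ ∃ ψ : Lp ℝ 2 (volume.restrict (Set.Ioo c d)),
      e₁ =ᵐ[volume.restrict (Set.Ioo a b)] conv (dPdx h) ((Set.Ioo c d).indicator ⇑ψ) ∧
      e₂ =ᵐ[volume.restrict (Set.Ioo a b)] conv (dQdx h) ((Set.Ioo c d).indicator ⇑ψ))
    (φn : ℕ → Lp ℝ 2 (volume.restrict (Set.Ioo c d)))
    (hconv : Filter.Tendsto
      (fun n => ((eLpNorm (fun t => conv (dPdx h) ((Set.Ioo c d).indicator ⇑(φn n)) t - e₁ t) 2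
            (volume.restrict (Set.Ioo a b))) ^ 2
          + (eLpNorm (fun t => conv (dQdx h) ((Set.Ioo c d).indicator ⇑(φn n)) t - e₂ t) 2
            (volume.restrict (Set.Ioo a b))) ^ 2) ^ (1/2 : ℝ))
      Filter.atTop (nhds 0)) :
    Filter.Tendsto (fun n => ‖φn n‖) Filter.atTop Filter.atTop :=
  stmt16_general a b c d h hh e₁ e₂ he₁ he₂ hnr φn hconv
end

section
/- Let S and K be nonempty open bounded intervals of ℝ and let h > 0. Neither of the two moment-estimation targets e₁ = (χ_S, 0) nor e₂ = (0, χ_S) belongs to the range of the adjoint field operator b₂*: there is no φ ∈ L²(K) with ((∂ₓP_h) ⋆ φ̃)(t) = 1 and ((∂ₓQ_h) ⋆ φ̃)(t) = 0 for almost every t ∈ S, and there is no φ ∈ L²(K) with ((∂ₓP_h) ⋆ φ̃)(t) = 0 and ((∂ₓQ_h) ⋆ φ̃)(t) = 1 for almost every t ∈ S. -/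
/-!
Writing `c = -i/π`, the complex kernel `∂ₓP_h + i ∂ₓQ_h` is `x ↦ c / (x + ih)²`, so for
`ψ ∈ L¹` the function `(∂ₓP_h ⋆ ψ) + i (∂ₓQ_h ⋆ ψ)` is the trace on the line `Im z = h` of
`F(z) = ∫ c ψ(s) / (z - s)² ds`, which is holomorphic on the upper half-plane. If this trace equals
a constant `w` a.e. on an interval, the identity theorem gives `F ≡ w` on the half-plane, while
dominated convergence gives `F(t + ih) → 0` as `t → ∞`. Hence `w = 0`, which rules out both
`(1, 0)` and `(0, 1)`.
-/

open MeasureTheory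

open Complex Filter Set Topology MeasureTheory

lemma dPdx_add_I_mul_dQdx (h x : ℝ) :
    (dPdx h x : ℂ) + I * dQdx h x = -(I / Real.pi) / ((x : ℂ) + I * h) ^ 2 := by
  rcases eq_or_ne ((x : ℂ) + I * h) 0 with hz | hz
  · -- at `x = h = 0` both sides are `0` by the convention `0⁻¹ = 0`
    obtain ⟨rfl, rfl⟩ : x = 0 ∧ h = 0 := by simpa [Complex.ext_iff] using hz
    simp [dPdx, dQdx]
  have hπ : (Real.pi : ℂ) ≠ 0 := ofReal_ne_zero.2 Real.pi_ne_zero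
  have hD : (x : ℂ) ^ 2 + (h : ℂ) ^ 2 = ((x : ℂ) + I * h) * ((x : ℂ) - I * h) := by
    linear_combination (h : ℂ) ^ 2 * I_sq
  have hz' : (x : ℂ) - I * h ≠ 0 := by
    intro h0; apply hz; simpa [Complex.ext_iff] using h0
  have hD0 : (x : ℂ) ^ 2 + (h : ℂ) ^ 2 ≠ 0 := hD ▸ mul_ne_zero hz hz'
  calc (dPdx h x : ℂ) + I * dQdx h x
      = -I * ((x : ℂ) - I * h) ^ 2 / (Real.pi * ((x : ℂ) ^ 2 + (h : ℂ) ^ 2) ^ 2) := by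
        simp only [dPdx, dQdx]
        push_cast
        field_simp
        linear_combination (h ^ 2 * I - 2 * x * h : ℂ) * I_sq
    _ = -(I / Real.pi) / ((x : ℂ) + I * h) ^ 2 := by
        rw [hD]
        field_simp

lemma pow_le_norm_sub_ofReal_pow {r : ℝ} {z : ℂ} (hr : 0 ≤ r) (hz : r ≤ |z.im|) (s : ℝ) (n : ℕ) :
    r ^ n ≤ ‖(z - s) ^ n‖ := by
  rw [norm_pow]
  exact pow_le_pow_left₀ hr (hz.trans (by simpa using abs_im_le_norm (z - s))) n

lemma norm_div_sub_ofReal_pow_le {r : ℝ} {z : ℂ} (hr : 0 < r) (hz : r ≤ |z.im|) (c : ℂ) (s : ℝ)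
    (n : ℕ) : ‖c / (z - s) ^ n‖ ≤ ‖c‖ / r ^ n := by
  rw [norm_div]
  exact div_le_div_of_nonneg_left (norm_nonneg c) (pow_pos hr n)
    (pow_le_norm_sub_ofReal_pow hr.le hz s n)

lemma hasDerivAt_div_sub_sq (c w : ℂ) {z : ℂ} (hz : z ≠ w) :
    HasDerivAt (fun z => c / (z - w) ^ 2) (-2 * c / (z - w) ^ 3) z := by
  have hzw : z - w ≠ 0 := sub_ne_zero.2 hz
  refine ((hasDerivAt_const z c).div (((hasDerivAt_id' z).sub_const w).pow 2)
    (pow_ne_zero 2 hzw)).congr_deriv ?_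
  simp only [Pi.pow_apply]
  field_simp
  ring

lemma frequently_nhdsGT_of_ae_restrict_Ioo {a b : ℝ} {p : ℝ → Prop} (hab : a < b)
    (hp : ∀ᵐ t ∂volume.restrict (Ioo a b), p t) : ∃ᶠ t in 𝓝[>] a, p t := by
  intro hnot
  obtain ⟨u, hau, hu⟩ := mem_nhdsGT_iff_exists_Ioo_subset.1 hnot
  have hfalse : ∀ᵐ t ∂volume.restrict (Ioo a (min b u)), False := by
    filter_upwards [ae_restrict_of_ae_restrict_of_subset
      (Ioo_subset_Ioo_right (min_le_left b u)) hp, ae_restrict_mem measurableSet_Ioo] with t ht htm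
    exact hu ⟨htm.1, htm.2.trans_le (min_le_right b u)⟩ ht
  rw [ae_iff, Measure.restrict_apply' measurableSet_Ioo] at hfalse
  simp only [not_false_eq_true, ofPred_true, univ_inter, Real.volume_Ioo, ENNReal.ofReal_eq_zero,
    tsub_le_iff_right, zero_add, inf_le_iff] at hfalse
  exact hfalse.elim (not_le.2 hab) (not_le.2 hau)

section
variable {ψ : ℝ → ℂ}

lemma aestronglyMeasurable_div_sub_ofReal_pow (hψ : Integrable ψ) (z : ℂ) (n : ℕ) :
    AEStronglyMeasurable (fun s : ℝ => ψ s / (z - s) ^ n) :=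
  hψ.aestronglyMeasurable.div₀
    (by fun_prop : Continuous fun s : ℝ => (z - s) ^ n).aestronglyMeasurable

lemma integrable_div_sub_ofReal_sq (hψ : Integrable ψ) {z : ℂ} (hz : z.im ≠ 0) :
    Integrable fun s : ℝ => ψ s / (z - s) ^ 2 :=
  (hψ.norm.div_const (|z.im| ^ 2)).mono' (aestronglyMeasurable_div_sub_ofReal_pow hψ z 2)
    (Eventually.of_forall fun s => norm_div_sub_ofReal_pow_le (abs_pos.2 hz) le_rfl _ s 2)

lemma differentiableOn_integral_div_sub_ofReal_sq (hψ : Integrable ψ) :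
    DifferentiableOn ℂ (fun z => ∫ s : ℝ, ψ s / (z - s) ^ 2) {z | 0 < z.im} := by
  intro z₀ hz₀
  set r := z₀.im / 2
  have hr : 0 < r := half_pos hz₀
  have hnhds : {z : ℂ | r < z.im} ∈ 𝓝 z₀ :=
    (isOpen_lt continuous_const continuous_im).mem_nhds (show r < z₀.im from half_lt_self hz₀)
  have hr_le : ∀ z ∈ {z : ℂ | r < z.im}, r ≤ |z.im| := fun z hz => hz.le.trans (le_abs_self _)
  refine DifferentiableAt.differentiableWithinAt (hasDerivAt_integral_of_dominated_loc_of_deriv_le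
    (F' := fun z s => -2 * ψ s / (z - s) ^ 3) (bound := fun s => ‖-2 * ψ s‖ / r ^ 3) hnhds
    (Eventually.of_forall fun z => aestronglyMeasurable_div_sub_ofReal_pow hψ z 2)
    (integrable_div_sub_ofReal_sq hψ hz₀.ne')
    ((aestronglyMeasurable_div_sub_ofReal_pow hψ z₀ 3).const_mul (-2) |>.congr ?_)
    (Eventually.of_forall fun s z hz => norm_div_sub_ofReal_pow_le hr (hr_le z hz) _ s 3)
    ((hψ.const_mul (-2)).norm.div_const _)
    (Eventually.of_forall fun s z hz => hasDerivAt_div_sub_sq _ _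
      (ne_of_apply_ne im (by simpa using (hr.trans hz).ne')))).2.differentiableAt
  exact Eventually.of_forall fun s => (mul_div_assoc _ _ _).symm

lemma tendsto_integral_div_sub_ofReal_sq (hψ : Integrable ψ) {h : ℝ} (hh : h ≠ 0) :
    Tendsto (fun t : ℝ => ∫ s : ℝ, ψ s / (t + I * h - s) ^ 2) atTop (𝓝 0) := by
  have hlim : ∀ s : ℝ, Tendsto (fun t : ℝ => ψ s / (t + I * h - s) ^ 2) atTop (𝓝 0) := by
    intro s
    have hcob : Tendsto (fun t : ℝ => (t : ℂ) + I * h - s) atTop (Bornology.cobounded ℂ) := by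
      rw [← tendsto_norm_atTop_iff_cobounded]
      refine tendsto_atTop_mono (fun t => ?_) (tendsto_atTop_add_const_right _ (-s) tendsto_id)
      calc t + -s ≤ |(((t : ℂ) + I * h - s)).re| := by simp [le_abs_self, sub_eq_add_neg]
        _ ≤ _ := abs_re_le_norm _
    simpa [div_eq_mul_inv, inv_pow] using
      ((tendsto_inv₀_cobounded.comp hcob).pow 2).const_mul (ψ s)
  simpa using tendsto_integral_filter_of_dominated_convergence (fun s => ‖ψ s‖ / |h| ^ 2)
    (Eventually.of_forall fun t => aestronglyMeasurable_div_sub_ofReal_pow hψ _ 2)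
    (Eventually.of_forall fun t => Eventually.of_forall fun s =>
      norm_div_sub_ofReal_pow_le (abs_pos.2 hh) (by simp) _ s 2)
    (hψ.norm.div_const _) (Eventually.of_forall hlim)

lemma eq_zero_of_ae_integral_div_sub_ofReal_sq_eq (hψ : Integrable ψ) {a b h : ℝ} {w : ℂ}
    (hab : a < b) (hh : 0 < h)
    (hw : ∀ᵐ t : ℝ ∂volume.restrict (Ioo a b), ∫ s : ℝ, ψ s / (t + I * h - s) ^ 2 = w) : w = 0 := by
  set U := {z : ℂ | 0 < z.im}
  have hU : IsOpen U := isOpen_lt continuous_const continuous_im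
  have hline : ∀ t : ℝ, (t : ℂ) + I * h ∈ U := fun t => by simpa [U] using hh
  have hmap : Tendsto (fun t : ℝ => (t : ℂ) + I * h) (𝓝[>] a) (𝓝[≠] ((a : ℂ) + I * h)) :=
    tendsto_nhdsWithin_of_tendsto_nhds_of_eventually_within _
      (((continuous_ofReal.add continuous_const).tendsto a).mono_left nhdsWithin_le_nhds)
      (eventually_nhdsWithin_of_forall fun t (ht : a < t) => by simpa using ht.ne')
  have hF : AnalyticOnNhd ℂ (fun z => ∫ s : ℝ, ψ s / (z - s) ^ 2) U :=
    (differentiableOn_integral_div_sub_ofReal_sq hψ).analyticOnNhd hU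
  have hconst : EqOn (fun z => ∫ s : ℝ, ψ s / (z - s) ^ 2) (fun _ => w) U :=
    hF.eqOn_of_preconnected_of_frequently_eq analyticOnNhd_const
      (convex_halfSpace_im_gt 0).isPreconnected (hline a)
      (hmap.frequently (frequently_nhdsGT_of_ae_restrict_Ioo hab hw))
  refine tendsto_nhds_unique ?_ (tendsto_integral_div_sub_ofReal_sq hψ hh.ne')
  exact tendsto_const_nhds.congr fun t => (hconst (hline t)).symm

end

lemma ofReal_conv_dPdx_add_I_mul_conv_dQdx {ψ : ℝ → ℝ} (hψ : Integrable ψ) {h : ℝ} (hh : h ≠ 0)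
    (t : ℝ) : (conv (dPdx h) ψ t : ℂ) + I * conv (dQdx h) ψ t =
      ∫ s : ℝ, -(I / Real.pi) * ψ s / (t + I * h - s) ^ 2 := by
  set f := fun s : ℝ => -(I / Real.pi) * ψ s / (t + I * h - s) ^ 2
  have hf : Integrable f :=
    integrable_div_sub_ofReal_sq (hψ.ofReal.const_mul _) (by simpa using hh)
  have hf_apply : ∀ s, f s = (dPdx h (t - s) * ψ s : ℝ) + I * (dQdx h (t - s) * ψ s : ℝ) := by
    intro s
    calc f s = -(I / Real.pi) / (((t - s : ℝ) : ℂ) + I * h) ^ 2 * ψ s := by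
          simp only [f]; push_cast; ring
      _ = _ := by rw [← dPdx_add_I_mul_dQdx]; push_cast; ring
  rw [← integral_re_add_im hf]
  simp [hf_apply, conv, mul_comm I]

lemma conv_dPdx_dQdx_eq_zero_of_ae_eq {ψ : ℝ → ℝ} (hψ : Integrable ψ) {a b h p q : ℝ}
    (hab : a < b) (hh : 0 < h) (hp : ∀ᵐ t ∂volume.restrict (Ioo a b), conv (dPdx h) ψ t = p)
    (hq : ∀ᵐ t ∂volume.restrict (Ioo a b), conv (dQdx h) ψ t = q) : p = 0 ∧ q = 0 := by
  have : (p : ℂ) + I * q = 0 := by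
    refine eq_zero_of_ae_integral_div_sub_ofReal_sq_eq
      (hψ.ofReal.const_mul (-(I / Real.pi))) hab hh ?_
    filter_upwards [hp, hq] with t hpt hqt
    rw [← hpt, ← hqt, ofReal_conv_dPdx_add_I_mul_conv_dQdx hψ hh.ne']
    rfl
  simpa [Complex.ext_iff] using this

theorem stmt19_general (a b c d h : ℝ) (hab : a < b) (hh : 0 < h) :
    (¬ ∃ φ : ℝ → ℝ, MemLp φ 2 (volume.restrict (Set.Ioo c d)) ∧
      (∀ᵐ t ∂(volume.restrict (Set.Ioo a b)),
        conv (dPdx h) ((Set.Ioo c d).indicator φ) t = 1) ∧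
      (∀ᵐ t ∂(volume.restrict (Set.Ioo a b)),
        conv (dQdx h) ((Set.Ioo c d).indicator φ) t = 0)) ∧
    (¬ ∃ φ : ℝ → ℝ, MemLp φ 2 (volume.restrict (Set.Ioo c d)) ∧
      (∀ᵐ t ∂(volume.restrict (Set.Ioo a b)),
        conv (dPdx h) ((Set.Ioo c d).indicator φ) t = 0) ∧
      (∀ᵐ t ∂(volume.restrict (Set.Ioo a b)),
        conv (dQdx h) ((Set.Ioo c d).indicator φ) t = 1)) := by
  have key (φ : ℝ → ℝ) (hφ : MemLp φ 2 (volume.restrict (Ioo c d))) {p q : ℝ} :=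
    conv_dPdx_dQdx_eq_zero_of_ae_eq (p := p) (q := q)
      ((integrable_indicator_iff measurableSet_Ioo).2 (hφ.integrable one_le_two)) hab hh
  exact ⟨fun ⟨φ, hφ, h1, h0⟩ => one_ne_zero (key φ hφ h1 h0).1,
    fun ⟨φ, hφ, h0, h1⟩ => one_ne_zero (key φ hφ h0 h1).2⟩

/-- Neither moment-estimation target `e₁ = (χ_S, 0)` nor `e₂ = (0, χ_S)` lies in the range of
the adjoint field operator `b₂*`: no `φ ∈ L²(K)` has `((∂ₓP_h) ⋆ φ̃, (∂ₓQ_h) ⋆ φ̃) = (1,0)`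
a.e. on `S`, and none has `((∂ₓP_h) ⋆ φ̃, (∂ₓQ_h) ⋆ φ̃) = (0,1)` a.e. on `S`.
Here `S = (a,b)`, `K = (c,d)`. -/
theorem stmt19 (a b c d h : ℝ) (hab : a < b) (hcd : c < d) (hh : 0 < h) :
    (¬ ∃ φ : ℝ → ℝ, MemLp φ 2 (volume.restrict (Set.Ioo c d)) ∧
      (∀ᵐ t ∂(volume.restrict (Set.Ioo a b)),
        conv (dPdx h) ((Set.Ioo c d).indicator φ) t = 1) ∧
      (∀ᵐ t ∂(volume.restrict (Set.Ioo a b)),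
        conv (dQdx h) ((Set.Ioo c d).indicator φ) t = 0)) ∧
    (¬ ∃ φ : ℝ → ℝ, MemLp φ 2 (volume.restrict (Set.Ioo c d)) ∧
      (∀ᵐ t ∂(volume.restrict (Set.Ioo a b)),
        conv (dPdx h) ((Set.Ioo c d).indicator φ) t = 0) ∧
      (∀ᵐ t ∂(volume.restrict (Set.Ioo a b)),
        conv (dQdx h) ((Set.Ioo c d).indicator φ) t = 1)) :=
  stmt19_general a b c d h hab hh
end
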